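/- Let v₁, v₂, v₃ : ℝ² → ℝ be smooth, with v₃ compactly supported. Then ∫_{ℝ²} ( (v₁)_{x₁} (v₂)_{x₂} − (v₁)_{x₂} (v₂)_{x₁} ) v₃ dx = ∫_{ℝ²} v₁ ( (v₂)_{x₁} (v₃)_{x₂} − (v₂)_{x₂} (v₃)_{x₁} ) dx. -/

import Mathlib

open MeasureTheory

noncomputable def pd (i : Fin 2) (f : EuclideanSpace ℝ (Fin 2) → ℝ) :
    EuclideanSpace ℝ (Fin 2) → ℝ :=
  fun x => fderiv ℝ f x (EuclideanSpace.single i 1)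

section aux
variable {f g : EuclideanSpace ℝ (Fin 2) → ℝ}

lemma pd_contDiff (i : Fin 2) (hf : ContDiff ℝ (⊤ : ℕ∞) f) : ContDiff ℝ (⊤ : ℕ∞) (pd i f) :=
  ((hf.fderiv_right (m := (⊤ : ℕ∞)) (by simp)).clm_apply contDiff_const)

lemma pd_hcs (i : Fin 2) (hc : HasCompactSupport f) : HasCompactSupport (pd i f) :=
  hc.fderiv_apply ℝ _

lemma pd_mul (i : Fin 2) (hf : ContDiff ℝ (⊤ : ℕ∞) f) (hg : ContDiff ℝ (⊤ : ℕ∞) g) (x) :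
    pd i (fun y => f y * g y) x = pd i f x * g x + f x * pd i g x := by
  simp only [pd]
  rw [fderiv_fun_mul (hf.differentiable (by simp) x) (hg.differentiable (by simp) x)]
  simp; ring

lemma pd_comm (hf : ContDiff ℝ (⊤ : ℕ∞) f) (x) : pd 0 (pd 1 f) x = pd 1 (pd 0 f) x := by
  have hd : Differentiable ℝ (fderiv ℝ f) :=
    (hf.fderiv_right (m := (⊤ : ℕ∞)) (by simp)).differentiable (by simp)
  have h0 : ∀ (i j : Fin 2), pd i (pd j f) x =
      fderiv ℝ (fderiv ℝ f) x (EuclideanSpace.single i 1) (EuclideanSpace.single j 1) := by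
    intro i j
    have : pd i (pd j f) x =
        fderiv ℝ (fun y => fderiv ℝ f y (EuclideanSpace.single j 1)) x
          (EuclideanSpace.single i 1) := rfl
    rw [this, fderiv_clm_apply (hd x) (differentiableAt_const _)]
    simp
  rw [h0 0 1, h0 1 0]
  exact (hf.contDiffAt.isSymmSndFDerivAt (by rw [minSmoothness_of_isRCLikeNormedField]; exact WithTop.coe_le_coe.mpr le_top)).eq _ _

lemma integral_pd_eq_zero (i : Fin 2) (hf : ContDiff ℝ (⊤ : ℕ∞) f) (hc : HasCompactSupport f) :
    ∫ x, pd i f x = 0 := by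
  have h := integral_mul_fderiv_eq_neg_fderiv_mul_of_integrable
    (μ := (volume : Measure (EuclideanSpace ℝ (Fin 2))))
    (f := fun _ : EuclideanSpace ℝ (Fin 2) => (1 : ℝ)) (g := f)
    (v := EuclideanSpace.single i 1)
    ?_ ?_ ?_ (fun x _ => differentiableAt_const 1) (fun x _ => hf.differentiable (by simp) x)
  · simpa [pd, fderiv_fun_const] using h
  · simp [fderiv_fun_const]
  · simp only [one_mul]; exact ((pd_contDiff i hf).continuous).integrable_of_hasCompactSupport (pd_hcs i hc)
  · simpa using hf.continuous.integrable_of_hasCompactSupport hc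

end aux

theorem stmt11 (v₁ v₂ v₃ : EuclideanSpace ℝ (Fin 2) → ℝ)
    (hv₁ : ContDiff ℝ (⊤ : ℕ∞) v₁) (hv₂ : ContDiff ℝ (⊤ : ℕ∞) v₂) (hv₃ : ContDiff ℝ (⊤ : ℕ∞) v₃)
    (hv₃c : HasCompactSupport v₃) :
    ∫ x, (pd 0 v₁ x * pd 1 v₂ x - pd 1 v₁ x * pd 0 v₂ x) * v₃ x =
      ∫ x, v₁ x * (pd 0 v₂ x * pd 1 v₃ x - pd 1 v₂ x * pd 0 v₃ x) := by
  classical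
  set F : EuclideanSpace ℝ (Fin 2) → ℝ := fun x => v₁ x * pd 1 v₂ x * v₃ x with hF
  set G : EuclideanSpace ℝ (Fin 2) → ℝ := fun x => v₁ x * pd 0 v₂ x * v₃ x with hG
  have hFs : ContDiff ℝ (⊤ : ℕ∞) F := (hv₁.mul (pd_contDiff 1 hv₂)).mul hv₃
  have hGs : ContDiff ℝ (⊤ : ℕ∞) G := (hv₁.mul (pd_contDiff 0 hv₂)).mul hv₃
  have hFc : HasCompactSupport F := hv₃c.mul_left
  have hGc : HasCompactSupport G := hv₃c.mul_left
  -- pointwise identity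
  have key : ∀ x, (pd 0 v₁ x * pd 1 v₂ x - pd 1 v₁ x * pd 0 v₂ x) * v₃ x
      - v₁ x * (pd 0 v₂ x * pd 1 v₃ x - pd 1 v₂ x * pd 0 v₃ x) = pd 0 F x - pd 1 G x := by
    intro x
    have hF0 : pd 0 F x = (pd 0 v₁ x * pd 1 v₂ x + v₁ x * pd 0 (pd 1 v₂) x) * v₃ x
        + (v₁ x * pd 1 v₂ x) * pd 0 v₃ x := by
      rw [hF]
      rw [pd_mul 0 (hv₁.mul (pd_contDiff 1 hv₂)) hv₃]
      rw [pd_mul 0 hv₁ (pd_contDiff 1 hv₂)]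
    have hG1 : pd 1 G x = (pd 1 v₁ x * pd 0 v₂ x + v₁ x * pd 1 (pd 0 v₂) x) * v₃ x
        + (v₁ x * pd 0 v₂ x) * pd 1 v₃ x := by
      rw [hG]
      rw [pd_mul 1 (hv₁.mul (pd_contDiff 0 hv₂)) hv₃]
      rw [pd_mul 1 hv₁ (pd_contDiff 0 hv₂)]
    rw [hF0, hG1, pd_comm hv₂ x]
    ring
  -- integrability
  have hI1 : Integrable (fun x => (pd 0 v₁ x * pd 1 v₂ x - pd 1 v₁ x * pd 0 v₂ x) * v₃ x) := by
    apply Continuous.integrable_of_hasCompactSupport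
    · exact ((((pd_contDiff 0 hv₁).continuous.mul (pd_contDiff 1 hv₂).continuous).sub
        ((pd_contDiff 1 hv₁).continuous.mul (pd_contDiff 0 hv₂).continuous)).mul hv₃.continuous)
    · exact hv₃c.mul_left
  have hA : Integrable (fun x => v₁ x * pd 0 v₂ x * pd 1 v₃ x) :=
    ((hv₁.continuous.mul (pd_contDiff 0 hv₂).continuous).mul
      (pd_contDiff 1 hv₃).continuous).integrable_of_hasCompactSupport (pd_hcs 1 hv₃c).mul_left
  have hB : Integrable (fun x => v₁ x * pd 1 v₂ x * pd 0 v₃ x) :=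
    ((hv₁.continuous.mul (pd_contDiff 1 hv₂).continuous).mul
      (pd_contDiff 0 hv₃).continuous).integrable_of_hasCompactSupport (pd_hcs 0 hv₃c).mul_left
  have hI2 : Integrable (fun x => v₁ x * (pd 0 v₂ x * pd 1 v₃ x - pd 1 v₂ x * pd 0 v₃ x)) :=
    (hA.sub hB).congr (Filter.Eventually.of_forall fun x => by simp [Pi.sub_apply]; ring)
  have hPF : Integrable (fun x => pd 0 F x) :=
    (pd_contDiff 0 hFs).continuous.integrable_of_hasCompactSupport (pd_hcs 0 hFc)
  have hPG : Integrable (fun x => pd 1 G x) :=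
    (pd_contDiff 1 hGs).continuous.integrable_of_hasCompactSupport (pd_hcs 1 hGc)
  rw [← sub_eq_zero, ← integral_sub hI1 hI2]
  rw [integral_congr_ae (Filter.Eventually.of_forall key), integral_sub hPF hPG,
    integral_pd_eq_zero 0 hFs hFc, integral_pd_eq_zero 1 hGs hGc, sub_zero]
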